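/- For a natural number n define δ(n) to be the supremum of the upper densities of all sets S ⊆ ℤ² satisfying N_S(x) ≤ n for every x ∈ S. Then δ(n − 1) < δ(n) for every n ∈ {1, 2, 4, 5, 6, 7, 8}. -/

import Mathlib

open Filter

/-- `y` is a neighbor of `x` in the 8-point (Moore) neighborhood of `ℤ²`. -/
def IsNbr (x y : ℤ × ℤ) : Prop :=
  y ≠ x ∧ |y.1 - x.1| ≤ 1 ∧ |y.2 - x.2| ≤ 1

/-- `N_S(x)`: the number of neighbors of `x` lying in `S`. -/
noncomputable def nbrCount (S : Set (ℤ × ℤ)) (x : ℤ × ℤ) : ℕ :=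
  Set.ncard {y ∈ S | IsNbr x y}

/-- The box `B_r = {x : |x₁| < r, |x₂| < r}`. -/
def box (r : ℕ) : Set (ℤ × ℤ) :=
  {x | |x.1| < (r : ℤ) ∧ |x.2| < (r : ℤ)}

/-- The upper density of `S ⊆ ℤ²`: `limsup_{r → ∞} |S ∩ B_r| / (2r-1)²`. -/
noncomputable def upperDensity (S : Set (ℤ × ℤ)) : ℝ :=
  limsup (fun r : ℕ => (Set.ncard (S ∩ box r) : ℝ) / (2 * (r : ℝ) - 1) ^ 2) atTop

/-- `δ(n)`: the supremum of upper densities of sets of maximum degree at most `n`. -/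
noncomputable def delta (n : ℕ) : ℝ :=
  sSup {d : ℝ | ∃ S : Set (ℤ × ℤ), (∀ x ∈ S, nbrCount S x ≤ n) ∧ d = upperDensity S}

/-!
Lower bounds come from periodic sets: if a pattern `A ⊆ (ℤ/p)²` has all torus degrees at most
`n`, its preimage in `ℤ²` has maximal degree at most `n` and density `|A|/p²`.

Upper bounds come from double counting over the `2 × 2` windows of `ℤ²`. Give each ordered pair of
distinct points in a window weight `1` if it is axis-parallel and `2` if it is diagonal. If every
pattern `T` a window can contain satisfies `2a|T| ≤ w(T) + 2b`, then summing over all windows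
meeting a finite set `F` gives `4a|F| ≤ ∑_{x ∈ F} N_F(x) + b · #windows`, so a set of maximal
degree `n` has upper density at most `b / (4a - n)`. The pairs `(a, b) = (1, 1), (3, 5), (4, 8)`
give `δ(0) ≤ 1/4`, `δ(1) ≤ 1/3`, `δ(3) ≤ 5/9`, `δ(4) ≤ 5/8`, `δ(5) ≤ 5/7`, `δ(6) ≤ 5/6`,
`δ(7) ≤ 8/9`, each strictly below the density of an explicit periodic set of the next degree.
-/

open Finset hiding box
open Topology

def nbrOffsets : Finset (ℤ × ℤ) :=
  {(1, 0), (-1, 0), (0, 1), (0, -1), (1, 1), (-1, -1), (1, -1), (-1, 1)}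

lemma mem_nbrOffsets {δ : ℤ × ℤ} : δ ∈ nbrOffsets ↔ δ ≠ 0 ∧ |δ.1| ≤ 1 ∧ |δ.2| ≤ 1 := by
  obtain ⟨a, b⟩ := δ
  simp only [nbrOffsets, mem_insert, mem_singleton, Prod.mk.injEq, ne_eq, Prod.mk_eq_zero,
    abs_le]
  omega

lemma isNbr_iff_sub_mem {x y : ℤ × ℤ} : IsNbr x y ↔ y - x ∈ nbrOffsets := by
  simp [IsNbr, mem_nbrOffsets, sub_ne_zero]

lemma nbrCount_eq_card (S : Set (ℤ × ℤ)) [DecidablePred (· ∈ S)] (x : ℤ × ℤ) :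
    nbrCount S x = #{δ ∈ nbrOffsets | x + δ ∈ S} := by
  rw [nbrCount, ← card_image_of_injective _ (add_right_injective x), ← Set.ncard_coe_finset]
  congr 1
  ext y
  simp only [Set.mem_ofPred_eq, coe_image, coe_filter, Set.mem_image, isNbr_iff_sub_mem]
  constructor
  · rintro ⟨hy, hxy⟩
    exact ⟨y - x, ⟨hxy, by simpa using hy⟩, add_sub_cancel x y⟩
  · rintro ⟨δ, ⟨hδ, hxδ⟩, rfl⟩
    exact ⟨hxδ, by simpa using hδ⟩

def unitSquare : Finset (ℤ × ℤ) := {(0, 0), (1, 0), (0, 1), (1, 1)}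

def windowPattern (F : Finset (ℤ × ℤ)) (v : ℤ × ℤ) : Finset (ℤ × ℤ) :=
  {e ∈ unitSquare | v + e ∈ F}

/-- An axis-parallel pair of neighbours lies in two unit squares and a diagonal pair in one, so
summed over all unit squares every ordered pair of neighbours has total weight `2`. -/
def pairWeight (δ : ℤ × ℤ) : ℕ := if δ.1 = 0 ∨ δ.2 = 0 then 1 else 2

def patternWeight (T : Finset (ℤ × ℤ)) : ℕ := ∑ p ∈ T.offDiag, pairWeight (p.2 - p.1)

def WindowBound (a b : ℕ) : Prop :=
  ∀ T ∈ unitSquare.powerset, 2 * a * #T ≤ patternWeight T + 2 * b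

instance (a b : ℕ) : Decidable (WindowBound a b) :=
  inferInstanceAs (Decidable (∀ T ∈ unitSquare.powerset, _))

lemma sum_unitSquare_offDiag (f : ℤ × ℤ → ℕ) :
    ∑ p ∈ unitSquare.offDiag, f (p.2 - p.1) * pairWeight (p.2 - p.1) =
      2 * ∑ δ ∈ nbrOffsets, f δ := by
  have hmaps : ∀ p ∈ unitSquare.offDiag, p.2 - p.1 ∈ nbrOffsets := by decide
  have hweight :
      ∀ δ ∈ nbrOffsets, #{p ∈ unitSquare.offDiag | p.2 - p.1 = δ} * pairWeight δ = 2 := by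
    decide
  rw [← sum_fiberwise_of_maps_to fun p hp => hmaps p hp, mul_sum]
  refine sum_congr rfl fun δ hδ => ?_
  rw [sum_congr rfl fun p hp => by rw [(mem_filter.1 hp).2], sum_const, smul_eq_mul,
    mul_comm (f δ), ← mul_assoc, hweight δ hδ]

section Windows

variable {F W : Finset (ℤ × ℤ)}

lemma four_mul_card_le_sum_card_windowPattern (hW : ∀ x ∈ F, ∀ e ∈ unitSquare, x - e ∈ W) :
    4 * #F ≤ ∑ v ∈ W, #(windowPattern F v) := by
  calc 4 * #F = ∑ e ∈ unitSquare, #F := by simp [unitSquare]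
    _ ≤ ∑ e ∈ unitSquare, #{v ∈ W | v + e ∈ F} := by
      refine sum_le_sum fun e he => card_le_card_of_injOn (· - e) (fun x hx => ?_) ?_
      · simpa using ⟨hW x hx e he, hx⟩
      · exact (sub_left_injective (b := e)).injOn
    _ = ∑ v ∈ W, #(windowPattern F v) :=
      (sum_card_bipartiteAbove_eq_sum_card_bipartiteBelow (fun v e => v + e ∈ F)).symm

lemma sum_patternWeight_windowPattern_le :
    ∑ v ∈ W, patternWeight (windowPattern F v) ≤
      2 * ∑ x ∈ F, #{δ ∈ nbrOffsets | x + δ ∈ F} := by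
  have hoffDiag : ∀ v, (windowPattern F v).offDiag =
      {p ∈ unitSquare.offDiag | v + p.1 ∈ F ∧ v + p.2 ∈ F} := by
    intro v
    ext p
    simp only [windowPattern, mem_offDiag, mem_filter]
    tauto
  calc ∑ v ∈ W, patternWeight (windowPattern F v)
      = ∑ p ∈ unitSquare.offDiag,
          #{v ∈ W | v + p.1 ∈ F ∧ v + p.2 ∈ F} * pairWeight (p.2 - p.1) := by
        simp_rw [patternWeight, hoffDiag, sum_filter]
        rw [sum_comm]
        simp_rw [← sum_filter, sum_const, smul_eq_mul]
    _ ≤ ∑ p ∈ unitSquare.offDiag,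
          #{x ∈ F | x + (p.2 - p.1) ∈ F} * pairWeight (p.2 - p.1) := by
        refine sum_le_sum fun p _ => Nat.mul_le_mul_right _ ?_
        refine card_le_card_of_injOn (· + p.1) (fun v hv => ?_) (add_left_injective _).injOn
        simp only [coe_filter, Set.mem_ofPred_eq] at hv ⊢
        simpa using hv.2
    _ = 2 * ∑ δ ∈ nbrOffsets, #{x ∈ F | x + δ ∈ F} :=
        sum_unitSquare_offDiag fun δ => #{x ∈ F | x + δ ∈ F}
    _ = 2 * ∑ x ∈ F, #{δ ∈ nbrOffsets | x + δ ∈ F} := by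
        congr 1
        exact (sum_card_bipartiteAbove_eq_sum_card_bipartiteBelow fun x δ => x + δ ∈ F).symm

theorem WindowBound.four_mul_card_le {a b : ℕ} (hab : WindowBound a b)
    (hW : ∀ x ∈ F, ∀ e ∈ unitSquare, x - e ∈ W) :
    4 * a * #F ≤ ∑ x ∈ F, #{δ ∈ nbrOffsets | x + δ ∈ F} + b * #W := by
  have hwindows : 2 * a * ∑ v ∈ W, #(windowPattern F v) ≤
      ∑ v ∈ W, patternWeight (windowPattern F v) + 2 * b * #W := by
    calc 2 * a * ∑ v ∈ W, #(windowPattern F v)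
        ≤ ∑ v ∈ W, (patternWeight (windowPattern F v) + 2 * b) := by
          rw [mul_sum]
          exact sum_le_sum fun v _ => hab _ (mem_powerset.2 (filter_subset _ _))
      _ = ∑ v ∈ W, patternWeight (windowPattern F v) + 2 * b * #W := by
          rw [sum_add_distrib, sum_const, smul_eq_mul, mul_comm]
  have hpoints := Nat.mul_le_mul_left (2 * a) (four_mul_card_le_sum_card_windowPattern hW)
  have hpairs := sum_patternWeight_windowPattern_le (F := F) (W := W)
  linarith

end Windows

noncomputable def boxFinset (r : ℕ) : Finset (ℤ × ℤ) :=
  Ioo (-(r : ℤ)) r ×ˢ Ioo (-(r : ℤ)) r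

lemma coe_boxFinset (r : ℕ) : (boxFinset r : Set (ℤ × ℤ)) = box r := by
  ext x
  simp [boxFinset, box, abs_lt]

lemma mem_boxFinset {r : ℕ} {x : ℤ × ℤ} : x ∈ boxFinset r ↔ x ∈ box r := by
  rw [← coe_boxFinset, mem_coe]

lemma finite_box (r : ℕ) : (box r).Finite :=
  coe_boxFinset r ▸ finite_toSet _

lemma card_boxFinset (r : ℕ) : #(boxFinset r) = (2 * r - 1) ^ 2 := by
  rw [boxFinset, card_product, Int.card_Ioo, sq]
  congr <;> omega

lemma ncard_inter_box_le (S : Set (ℤ × ℤ)) (r : ℕ) :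
    ((S ∩ box r).ncard : ℝ) ≤ (2 * r - 1) ^ 2 := by
  have h : (S ∩ box r).ncard ≤ (2 * r - 1) ^ 2 := by
    rw [← card_boxFinset, ← Set.ncard_coe_finset, coe_boxFinset]
    exact Set.ncard_le_ncard Set.inter_subset_right (finite_box r)
  calc ((S ∩ box r).ncard : ℝ) ≤ ((2 * r - 1 : ℕ) : ℝ) ^ 2 := by exact_mod_cast h
    _ ≤ (2 * r - 1) ^ 2 := by
      rcases Nat.eq_zero_or_pos r with rfl | hr
      · norm_num
      · rw [Nat.cast_sub (by omega)]
        push_cast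
        rfl

lemma two_mul_sub_one_ne_zero (r : ℕ) : (2 * r - 1 : ℝ) ≠ 0 := by
  have : (2 * r - 1 : ℝ) = ((2 * r - 1 : ℤ) : ℝ) := by push_cast; ring
  rw [this]
  exact_mod_cast (by omega : (2 * r - 1 : ℤ) ≠ 0)

lemma tendsto_mul_sq_add_div_sq (C k : ℝ) :
    Tendsto (fun r : ℕ => C * (2 * r - 1 + k) ^ 2 / (2 * r - 1) ^ 2) atTop (𝓝 C) := by
  have hinv : Tendsto (fun r : ℕ => (2 * r - 1 : ℝ)⁻¹) atTop (𝓝 0) :=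
    (tendsto_atTop_add_const_right _ _
      (tendsto_natCast_atTop_atTop.const_mul_atTop two_pos)).inv_tendsto_atTop
  have hlim := (((hinv.const_mul k).const_add 1).pow 2).const_mul C
  rw [mul_zero, add_zero, one_pow, mul_one] at hlim
  refine hlim.congr fun r => ?_
  have := two_mul_sub_one_ne_zero r
  field_simp

lemma upperDensity_le_of_ncard_le {S : Set (ℤ × ℤ)} {C k : ℝ}
    (h : ∀ r : ℕ, ((S ∩ box r).ncard : ℝ) ≤ C * (2 * r - 1 + k) ^ 2) : upperDensity S ≤ C := by
  have hlim := tendsto_mul_sq_add_div_sq C k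
  refine (limsup_le_limsup (Eventually.of_forall fun r => ?_) ?_ hlim.isBoundedUnder_le).trans
    hlim.limsup_eq.le
  · exact div_le_div_of_nonneg_right (h r) (sq_nonneg _)
  · exact (isBoundedUnder_of ⟨0, fun r => by positivity⟩).isCoboundedUnder_le

lemma le_upperDensity_of_le_ncard {S : Set (ℤ × ℤ)} {C k : ℝ}
    (h : ∀ᶠ r : ℕ in atTop, C * (2 * r - 1 + k) ^ 2 ≤ (S ∩ box r).ncard) :
    C ≤ upperDensity S := by
  have hlim := tendsto_mul_sq_add_div_sq C k
  refine hlim.limsup_eq.ge.trans (limsup_le_limsup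
    (h.mono fun r hr => div_le_div_of_nonneg_right hr (sq_nonneg _)) hlim.isCoboundedUnder_le ?_)
  exact isBoundedUnder_of
    ⟨1, fun r => div_le_one_of_le₀ (ncard_inter_box_le S r) (sq_nonneg _)⟩

lemma upperDensity_le_one (S : Set (ℤ × ℤ)) : upperDensity S ≤ 1 :=
  upperDensity_le_of_ncard_le (k := 0) fun r => by simpa using ncard_inter_box_le S r

lemma upperDensity_le_delta {S : Set (ℤ × ℤ)} {n : ℕ} (hS : ∀ x ∈ S, nbrCount S x ≤ n) :
    upperDensity S ≤ delta n :=
  le_csSup ⟨1, by rintro _ ⟨S, -, rfl⟩; exact upperDensity_le_one S⟩ ⟨S, hS, rfl⟩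

lemma delta_le_of_forall {n : ℕ} {C : ℝ}
    (h : ∀ S : Set (ℤ × ℤ), (∀ x ∈ S, nbrCount S x ≤ n) → upperDensity S ≤ C) : delta n ≤ C :=
  csSup_le ⟨_, ∅, by simp, rfl⟩ (by rintro _ ⟨S, hS, rfl⟩; exact h S hS)

lemma ncard_inter_box_le_of_windowBound {a b n : ℕ} (hab : WindowBound a b) {S : Set (ℤ × ℤ)}
    (hS : ∀ x ∈ S, nbrCount S x ≤ n) (r : ℕ) :
    4 * a * (S ∩ box r).ncard ≤ n * (S ∩ box r).ncard + b * (2 * r + 1) ^ 2 := by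
  classical
  set F : Finset (ℤ × ℤ) := {x ∈ boxFinset r | x ∈ S}
  have hF : (S ∩ box r).ncard = #F := by
    rw [← Set.ncard_coe_finset, coe_filter, ← coe_boxFinset]
    congr 1
    ext x
    simp [and_comm]
  have hW : ∀ x ∈ F, ∀ e ∈ unitSquare, x - e ∈ boxFinset (r + 1) := by
    intro x hx e he
    simp only [F, mem_filter, mem_boxFinset, box, Set.mem_ofPred_eq, abs_lt] at hx ⊢
    simp only [unitSquare, mem_insert, mem_singleton] at he
    rcases he with rfl | rfl | rfl | rfl <;> simp <;> omega
  have hdeg : ∀ x ∈ F, #{δ ∈ nbrOffsets | x + δ ∈ F} ≤ n := by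
    intro x hx
    have hxS : x ∈ S := (mem_filter.1 hx).2
    calc #{δ ∈ nbrOffsets | x + δ ∈ F} ≤ #{δ ∈ nbrOffsets | x + δ ∈ S} :=
          card_le_card (monotone_filter_right _ fun δ _ h => (mem_filter.1 h).2)
      _ = nbrCount S x := (nbrCount_eq_card S x).symm
      _ ≤ n := hS x hxS
  have hcard : #(boxFinset (r + 1)) = (2 * r + 1) ^ 2 := by
    rw [card_boxFinset]
    congr 1
  calc 4 * a * (S ∩ box r).ncard
      ≤ ∑ x ∈ F, #{δ ∈ nbrOffsets | x + δ ∈ F} + b * #(boxFinset (r + 1)) := by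
        rw [hF]
        exact hab.four_mul_card_le hW
    _ ≤ n * (S ∩ box r).ncard + b * (2 * r + 1) ^ 2 := by
        rw [hF, hcard, mul_comm n]
        gcongr
        exact sum_le_card_nsmul _ _ _ hdeg

lemma upperDensity_le_of_windowBound {a b n : ℕ} (hab : WindowBound a b) (hn : n < 4 * a)
    {S : Set (ℤ × ℤ)} (hS : ∀ x ∈ S, nbrCount S x ≤ n) :
    upperDensity S ≤ b / (4 * a - n) := by
  have hpos : (0 : ℝ) < 4 * a - n := sub_pos.2 (by exact_mod_cast hn)
  refine upperDensity_le_of_ncard_le (k := 2) fun r => ?_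
  have h : (4 * a * (S ∩ box r).ncard : ℝ) ≤
      n * (S ∩ box r).ncard + b * (2 * r + 1) ^ 2 := by
    exact_mod_cast ncard_inter_box_le_of_windowBound hab hS r
  rw [div_mul_eq_mul_div, le_div_iff₀ hpos]
  linarith

def reduceMod (p : ℕ) : ℤ × ℤ →+ ZMod p × ZMod p :=
  (Int.castAddHom (ZMod p)).prodMap (Int.castAddHom (ZMod p))

lemma reduceMod_apply (p : ℕ) (x : ℤ × ℤ) : reduceMod p x = ((x.1 : ZMod p), (x.2 : ZMod p)) :=
  rfl

lemma nbrCount_preimage_reduceMod (p : ℕ) (A : Finset (ZMod p × ZMod p)) (x : ℤ × ℤ) :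
    nbrCount (reduceMod p ⁻¹' A) x =
      #{δ ∈ nbrOffsets | reduceMod p x + reduceMod p δ ∈ A} := by
  classical
  rw [nbrCount_eq_card]
  simp only [Set.mem_preimage, mem_coe, map_add]

lemma card_Ico_filter_intCast_eq (p : ℕ) [NeZero p] (c : ℤ) (t : ℕ) (z : ZMod p) :
    #{x ∈ Ico c (c + p * t) | ((x : ℤ) : ZMod p) = z} = t := by
  obtain ⟨v, rfl⟩ := ZMod.intCast_surjective z
  simp_rw [ZMod.intCast_eq_intCast_iff]
  have h := Int.Ico_filter_modEq_card c (c + p * t) (Int.natCast_pos.2 (NeZero.pos p)) v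
  have hp : (p : ℚ) ≠ 0 := by exact_mod_cast NeZero.ne p
  have hceil : ⌈((c + p * t : ℤ) - v : ℚ) / p⌉ = ⌈((c - v : ℤ) : ℚ) / p⌉ + t := by
    rw [← Int.ceil_add_natCast]
    congr 1
    field_simp
    push_cast
    ring
  push_cast at h hceil
  rw [hceil, add_sub_cancel_left, max_eq_left (by positivity)] at h
  exact_mod_cast h

lemma card_filter_reduceMod_mem (p : ℕ) [NeZero p] (A : Finset (ZMod p × ZMod p)) (c : ℤ)
    (t : ℕ) :
    #{x ∈ Ico c (c + p * t) ×ˢ Ico c (c + p * t) | reduceMod p x ∈ A} = #A * t ^ 2 := by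
  set I := Ico c (c + p * t)
  rw [card_eq_sum_card_fiberwise (s := {x ∈ I ×ˢ I | reduceMod p x ∈ A}) (t := A)
      fun x hx => (mem_filter.1 hx).2, ← smul_eq_mul, ← sum_const]
  refine sum_congr rfl fun z hz => ?_
  have hfibre : {x ∈ {x ∈ I ×ˢ I | reduceMod p x ∈ A} | reduceMod p x = z} =
      {x ∈ I | ((x : ℤ) : ZMod p) = z.1} ×ˢ {x ∈ I | ((x : ℤ) : ZMod p) = z.2} := by
    ext x
    simp only [mem_filter, mem_product]
    simp only [reduceMod_apply, Prod.ext_iff]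
    constructor
    · rintro ⟨⟨⟨hx₁, hx₂⟩, -⟩, hz₁, hz₂⟩
      exact ⟨⟨hx₁, hz₁⟩, hx₂, hz₂⟩
    · rintro ⟨⟨hx₁, hz₁⟩, hx₂, hz₂⟩
      have hxz : ((x.1 : ZMod p), (x.2 : ZMod p)) = z := Prod.ext hz₁ hz₂
      exact ⟨⟨⟨hx₁, hx₂⟩, hxz ▸ hz⟩, hz₁, hz₂⟩
  rw [hfibre, card_product, card_Ico_filter_intCast_eq, card_Ico_filter_intCast_eq, sq]

lemma card_mul_sq_le_ncard_preimage_inter_box (p : ℕ) [NeZero p] (A : Finset (ZMod p × ZMod p))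
    (r : ℕ) : #A * ((2 * r - 1) / p) ^ 2 ≤ (reduceMod p ⁻¹' A ∩ box r).ncard := by
  classical
  set t := (2 * r - 1) / p
  set I := Ico (-(r : ℤ) + 1) (-(r : ℤ) + 1 + p * t)
  have hI : I ⊆ Ioo (-(r : ℤ)) r := by
    have : p * t ≤ 2 * r - 1 := Nat.mul_div_le _ _
    intro x hx
    simp only [I, mem_Ico, mem_Ioo] at hx ⊢
    omega
  rw [← card_filter_reduceMod_mem p A _ t, ← Set.ncard_coe_finset]
  refine Set.ncard_le_ncard ?_ ((finite_box r).inter_of_right _)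
  rw [coe_filter, ← coe_boxFinset]
  exact fun x ⟨hx, hA⟩ => ⟨hA, product_subset_product hI hI hx⟩

lemma le_upperDensity_preimage_reduceMod (p : ℕ) [NeZero p] (A : Finset (ZMod p × ZMod p)) :
    (#A : ℝ) / p ^ 2 ≤ upperDensity (reduceMod p ⁻¹' A) := by
  have hp : 0 < p := NeZero.pos p
  refine le_upperDensity_of_le_ncard (k := -p) (eventually_atTop.2 ⟨p, fun r hr => ?_⟩)
  set t := (2 * r - 1) / p
  have hlt : ((2 * r - 1 : ℕ) : ℝ) < t * p + p := by exact_mod_cast Nat.lt_div_mul_add hp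
  rw [Nat.cast_sub (by omega)] at hlt
  push_cast at hlt
  have hpr : (1 : ℝ) ≤ p ∧ (p : ℝ) ≤ r := by constructor <;> exact_mod_cast (by omega)
  have hsq : (2 * r - 1 + -p : ℝ) ^ 2 ≤ (t * p) ^ 2 :=
    pow_le_pow_left₀ (by linarith) (by linarith) 2
  calc (#A : ℝ) / p ^ 2 * (2 * r - 1 + -p) ^ 2
      ≤ #A / p ^ 2 * ((t : ℝ) * p) ^ 2 := by gcongr
    _ = ((#A * t ^ 2 : ℕ) : ℝ) := by push_cast; field_simp
    _ ≤ ((reduceMod p ⁻¹' A ∩ box r).ncard : ℕ) := by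
        exact_mod_cast card_mul_sq_le_ncard_preimage_inter_box p A r

lemma div_sq_le_delta {n p : ℕ} [NeZero p] {A : Finset (ZMod p × ZMod p)}
    (hA : ∀ z ∈ A, #{δ ∈ nbrOffsets | z + reduceMod p δ ∈ A} ≤ n) :
    (#A : ℝ) / p ^ 2 ≤ delta n :=
  (le_upperDensity_preimage_reduceMod p A).trans <| upperDensity_le_delta fun x hx =>
    (nbrCount_preimage_reduceMod p A x).trans_le (hA _ hx)

lemma delta_lt_delta_of_windowBound {m n a b p : ℕ} [NeZero p] {A : Finset (ZMod p × ZMod p)}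
    (hab : WindowBound a b) (hm : m < 4 * a)
    (hA : ∀ z ∈ A, #{δ ∈ nbrOffsets | z + reduceMod p δ ∈ A} ≤ n)
    (hlt : b * p ^ 2 < #A * (4 * a - m)) : delta m < delta n := by
  have hpos : (0 : ℝ) < 4 * a - m := sub_pos.2 (by exact_mod_cast hm)
  have hp : (0 : ℝ) < p ^ 2 := by have := NeZero.pos p; positivity
  calc delta m ≤ b / (4 * a - m) :=
        delta_le_of_forall fun _ => upperDensity_le_of_windowBound hab hm
    _ < #A / p ^ 2 := by
      rw [div_lt_div_iff₀ hpos hp]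
      have : ((4 * a - m : ℕ) : ℝ) = 4 * a - m := by push_cast [hm.le]; ring
      rw [← this]
      exact_mod_cast hlt
    _ ≤ delta n := div_sq_le_delta hA

def pattern₁ : Finset (ZMod 6 × ZMod 6) := {z | z.2.val % 2 = 0 ∧ z.1.val % 3 < 2}

def pattern₂ : Finset (ZMod 2 × ZMod 2) := {z | z.2 = 0}

def pattern₄ : Finset (ZMod 5 × ZMod 5) := {z | (z.1 + 2 * z.2).val ≤ 2}

def pattern₅ : Finset (ZMod 5 × ZMod 5) :=
  {(0, 0), (0, 1), (0, 2), (0, 3), (0, 4), (1, 0), (1, 3), (2, 0), (2, 1), (2, 2), (2, 3),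
    (3, 0), (3, 2), (3, 3), (3, 4), (4, 0), (4, 2)}

def pattern₆ : Finset (ZMod 5 × ZMod 5) := {z | z.2 ≠ 2 * z.1}

def pattern₇ : Finset (ZMod 3 × ZMod 3) := {0}ᶜ

def pattern₈ : Finset (ZMod 1 × ZMod 1) := univ

theorem delta_strictMono_off_three :
    ∀ n ∈ ({1, 2, 4, 5, 6, 7, 8} : Finset ℕ), delta (n - 1) < delta n := by
  intro n hn
  fin_cases hn
  · apply delta_lt_delta_of_windowBound (a := 1) (b := 1) (A := pattern₁) <;> decide
  · apply delta_lt_delta_of_windowBound (a := 1) (b := 1) (A := pattern₂) <;> decide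
  · apply delta_lt_delta_of_windowBound (a := 3) (b := 5) (A := pattern₄) <;> decide
  · apply delta_lt_delta_of_windowBound (a := 3) (b := 5) (A := pattern₅) <;> decide
  · apply delta_lt_delta_of_windowBound (a := 3) (b := 5) (A := pattern₆) <;> decide
  · apply delta_lt_delta_of_windowBound (a := 3) (b := 5) (A := pattern₇) <;> decide
  · apply delta_lt_delta_of_windowBound (a := 4) (b := 8) (A := pattern₈) <;> decide
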